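/- Let n ≥ 2 be an integer and let λ, ν ∈ ℂ satisfy Re(λ−ν) > 0 and Re(λ+ν) > n−1. Then for every Schwartz function φ on ℝⁿ, the function (x, xₙ) ↦ k_{λ,ν}(x, xₙ)·φ(x, xₙ) is Lebesgue integrable on ℝⁿ. -/

import Mathlib

open MeasureTheory

/-- The kernel `k_{λ,ν}(x, xₙ) = |xₙ|^{λ+ν−n} (|x|² + xₙ²)^{−ν}` on
`ℝⁿ = ℝⁿ⁻¹ × ℝ`, assigned the value `0` on the null set `{xₙ = 0}`. -/
noncomputable def kker (n : ℕ) (lam nu : ℂ) :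
    EuclideanSpace ℝ (Fin (n - 1)) × ℝ → ℂ := fun p =>
  if p.2 = 0 then 0
  else ((|p.2| : ℝ) : ℂ) ^ (lam + nu - (n : ℂ)) *
    ((‖p.1‖ ^ 2 + p.2 ^ 2 : ℝ) : ℂ) ^ (-nu)

/-!
On `{xₙ ≠ 0}` the kernel has modulus `|xₙ|^a (|x|² + xₙ²)^(-c)` with `a = Re(λ+ν) - n > -1` and
`a - 2c = Re(λ-ν) - n > -n`. If `c ≤ 0` the second factor grows only polynomially. If `c > 0` it
is at most `|x|^(-2(c-s)) |xₙ|^(-2s)` for any `0 ≤ s ≤ c`; choosing `s` with `a - 2s > -1` and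
`2(c-s) < n - 1` and bounding `|x|^(-2(c-s))` by `∏ᵢ |xᵢ|^(-2(c-s)/(n-1))`, the kernel times a
large negative power of `1 + ‖p‖` is dominated by a product of integrable functions of one
variable. So `|k| dx` is a measure of temperate growth, and Schwartz functions are integrable
against such measures.
-/

open Set Real
open scoped SchwartzMap

namespace SchwartzMap

variable {D : Type*} [NormedAddCommGroup D] [NormedSpace ℝ D] [MeasurableSpace D] [BorelSpace D]
  [SecondCountableTopology D] {μ : Measure D}

theorem integrable_mul_of_integrable_norm_mul {g : D → ℂ} (hg : AEMeasurable g μ)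
    {N : ℕ} (hgN : Integrable (fun x => ‖g x‖ * (1 + ‖x‖) ^ (-(N : ℝ))) μ) (φ : 𝓢(D, ℂ)) :
    Integrable (fun x => g x * φ x) μ := by
  have hρ : AEMeasurable (fun x => ‖g x‖₊) μ := hg.nnnorm
  have : (μ.withDensity fun x => ‖g x‖₊).HasTemperateGrowth :=
    ⟨N, (integrable_withDensity_iff_integrable_smul₀ hρ).2 (by simpa [NNReal.smul_def] using hgN)⟩
  refine ((integrable_withDensity_iff_integrable_smul₀ hρ).1 φ.integrable).norm.mono'
    (hg.aestronglyMeasurable.mul φ.continuous.aestronglyMeasurable) (ae_of_all _ fun x => ?_)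
  simp [NNReal.smul_def]

end SchwartzMap

lemma integrableOn_Ioi_rpow_mul_one_add_rpow_neg {e N : ℝ} (he : -1 < e) (hN : e + 1 < N) :
    IntegrableOn (fun s : ℝ => s ^ e * (1 + s) ^ (-N)) (Ioi 0) := by
  have hmeas : AEStronglyMeasurable (fun s : ℝ => s ^ e * (1 + s) ^ (-N)) := by fun_prop
  rw [← Ioc_union_Ioi_eq_Ioi zero_le_one, integrableOn_union]
  constructor
  · have hint : IntegrableOn (fun s : ℝ => s ^ e) (Ioc 0 1) :=
      (intervalIntegrable_iff_integrableOn_Ioc_of_le zero_le_one).1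
        (intervalIntegral.intervalIntegrable_rpow' he)
    refine hint.mono' hmeas.restrict (ae_restrict_of_forall_mem measurableSet_Ioc fun s hs => ?_)
    have hs : 0 < s := hs.1
    rw [Real.norm_of_nonneg (by positivity)]
    exact mul_le_of_le_one_right (by positivity)
      (rpow_le_one_of_one_le_of_nonpos (by linarith) (by linarith))
  · have hint : IntegrableOn (fun s : ℝ => s ^ (e - N)) (Ioi 1) :=
      integrableOn_Ioi_rpow_of_lt (by linarith) zero_lt_one
    refine hint.mono' hmeas.restrict (ae_restrict_of_forall_mem measurableSet_Ioi fun s hs => ?_)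
    have hs : 0 < s := zero_lt_one.trans hs
    rw [Real.norm_of_nonneg (by positivity), sub_eq_add_neg, rpow_add hs]
    exact mul_le_mul_of_nonneg_left
      (rpow_le_rpow_of_nonpos hs (by linarith) (by linarith)) (by positivity)

lemma integrable_abs_rpow_mul_one_add_abs_rpow_neg {e N : ℝ} (he : -1 < e) (hN : e + 1 < N) :
    Integrable (fun s : ℝ => |s| ^ e * (1 + |s|) ^ (-N)) := by
  set h := (Ici 0).indicator fun s : ℝ => s ^ e * (1 + s) ^ (-N)
  have hh : Integrable h := (integrable_indicator_iff measurableSet_Ici).2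
    ((integrableOn_Ici_iff_integrableOn_Ioi enorm_ne_top).2
      (integrableOn_Ioi_rpow_mul_one_add_rpow_neg he hN))
  refine (hh.add hh.comp_neg).mono' (by fun_prop) (ae_of_all _ fun s => ?_)
  have hh0 : ∀ s, 0 ≤ h s := fun s => indicator_nonneg (fun s (hs : 0 ≤ s) =>
    mul_nonneg (rpow_nonneg hs _) (rpow_nonneg (by linarith) _)) s
  have hs0 : 0 ≤ |s| ^ e * (1 + |s|) ^ (-N) := by positivity
  rw [Real.norm_of_nonneg hs0, Pi.add_apply]
  rcases le_total 0 s with hs | hs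
  · have : h s = |s| ^ e * (1 + |s|) ^ (-N) := by simp [h, hs, abs_of_nonneg hs]
    linarith [hh0 (-s)]
  · have : h (-s) = |s| ^ e * (1 + |s|) ^ (-N) := by simp [h, hs, abs_of_nonpos hs]
    linarith [hh0 s]

namespace EuclideanSpace

variable {ι : Type*} [Fintype ι]

lemma integrable_prod_apply {g : ℝ → ℝ} (hg : Integrable g) :
    Integrable (fun x : EuclideanSpace ℝ ι => ∏ i, g (x i)) :=
  have hprod : Integrable (fun y : ι → ℝ => ∏ i, g (y i)) := Integrable.fintype_prod fun _ => hg
  ((volume_preserving_symm_measurableEquiv_toLp ι).integrable_comp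
    hprod.aestronglyMeasurable).2 hprod

lemma ae_forall_apply_ne_zero : ∀ᵐ x : EuclideanSpace ℝ ι, ∀ i, x i ≠ 0 := by
  have hpi : ∀ᵐ y : ι → ℝ, ∀ i, y i ≠ 0 :=
    ae_all_iff.2 fun i => ae_iff.2 (by simpa [volume_pi] using Measure.pi_hyperplane _ i 0)
  exact (volume_preserving_symm_measurableEquiv_toLp ι).quasiMeasurePreserving.ae hpi

lemma norm_rpow_le_prod_abs_apply_rpow [Nonempty ι] {x : EuclideanSpace ℝ ι} (hx : ∀ i, x i ≠ 0)
    {B : ℝ} (hB : B ≤ 0) : ‖x‖ ^ B ≤ ∏ i, |x i| ^ (B / Fintype.card ι) := by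
  have hcard : (Fintype.card ι : ℝ) ≠ 0 := by positivity
  calc ‖x‖ ^ B = ∏ _i : ι, ‖x‖ ^ (B / Fintype.card ι) := by
        rw [Finset.prod_const, Finset.card_univ, ← rpow_natCast, ← rpow_mul (norm_nonneg _),
          div_mul_cancel₀ _ hcard]
    _ ≤ ∏ i, |x i| ^ (B / Fintype.card ι) :=
        Finset.prod_le_prod (fun _ _ => by positivity) fun i _ =>
          rpow_le_rpow_of_nonpos (abs_pos.2 (hx i)) (by simpa using PiLp.norm_apply_le x i)
            (div_nonpos_of_nonpos_of_nonneg hB (by positivity))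

end EuclideanSpace

lemma sq_add_sq_rpow_neg_le {x y s c : ℝ} (hx : 0 < x) (hy : 0 < y) (hs : 0 ≤ s) (hsc : s ≤ c) :
    (x ^ 2 + y ^ 2) ^ (-c) ≤ x ^ (-2 * (c - s)) * y ^ (-2 * s) := by
  have hxy : 0 < x ^ 2 + y ^ 2 := by positivity
  calc (x ^ 2 + y ^ 2) ^ (-c) = (x ^ 2 + y ^ 2) ^ (-(c - s)) * (x ^ 2 + y ^ 2) ^ (-s) := by
        rw [← rpow_add hxy]; ring_nf
    _ ≤ (x ^ 2) ^ (-(c - s)) * (y ^ 2) ^ (-s) :=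
        mul_le_mul (rpow_le_rpow_of_nonpos (by positivity) (by linarith [sq_nonneg y])
          (by linarith)) (rpow_le_rpow_of_nonpos (by positivity) (by linarith [sq_nonneg x])
          (by linarith)) (by positivity) (by positivity)
    _ = x ^ (-2 * (c - s)) * y ^ (-2 * s) := by
        rw [← rpow_natCast_mul hx.le, ← rpow_natCast_mul hy.le]; ring_nf

section Weights

variable {ι : Type*} [Fintype ι]

lemma one_add_norm_rpow_neg_le (p : EuclideanSpace ℝ ι × ℝ) {N : ℝ}
    (hN : 2 * Fintype.card ι ≤ N) :
    (1 + ‖p‖) ^ (-N) ≤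
      (∏ i, (1 + |p.1 i|) ^ (-2 : ℝ)) * (1 + |p.2|) ^ (-(N - 2 * Fintype.card ι)) := by
  have hp : 0 < 1 + ‖p‖ := by positivity
  have hsplit : (1 + ‖p‖) ^ (-N) =
      (∏ _i : ι, (1 + ‖p‖) ^ (-2 : ℝ)) * (1 + ‖p‖) ^ (-(N - 2 * Fintype.card ι)) := by
    rw [Finset.prod_const, Finset.card_univ, ← rpow_natCast, ← rpow_mul hp.le, ← rpow_add hp]
    ring_nf
  rw [hsplit]
  refine mul_le_mul (Finset.prod_le_prod (fun _ _ => by positivity) fun i _ => ?_) ?_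
    (by positivity) (by positivity)
  · refine rpow_le_rpow_of_nonpos (by positivity) ?_ (by norm_num)
    simpa using (PiLp.norm_apply_le p.1 i).trans (norm_fst_le p)
  · refine rpow_le_rpow_of_nonpos (by positivity) ?_ (by linarith)
    simpa using norm_snd_le p

lemma integrable_abs_snd_rpow_mul_norm_fst_rpow_mul_one_add_norm_rpow_neg [Nonempty ι]
    {a B N : ℝ} (ha : -1 < a) (hB : -(Fintype.card ι : ℝ) < B) (hB0 : B ≤ 0)
    (hN : a + 1 + 2 * Fintype.card ι < N) :
    Integrable fun p : EuclideanSpace ℝ ι × ℝ => |p.2| ^ a * ‖p.1‖ ^ B * (1 + ‖p‖) ^ (-N) := by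
  set m : ℝ := (Fintype.card ι : ℝ)
  have hm : 0 < m := by positivity
  have hb : B / m ≤ 0 := div_nonpos_of_nonpos_of_nonneg hB0 hm.le
  have hfst : Integrable fun x : EuclideanSpace ℝ ι =>
      ∏ i, |x i| ^ (B / m) * (1 + |x i|) ^ (-2 : ℝ) :=
    EuclideanSpace.integrable_prod_apply <| integrable_abs_rpow_mul_one_add_abs_rpow_neg
      (by rwa [lt_div_iff₀ hm, neg_one_mul]) (by linarith)
  have hsnd : Integrable fun t : ℝ => |t| ^ a * (1 + |t|) ^ (-(N - 2 * m)) :=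
    integrable_abs_rpow_mul_one_add_abs_rpow_neg ha (by linarith)
  refine (hfst.mul_prod hsnd).mono' (by fun_prop) ?_
  filter_upwards [Measure.quasiMeasurePreserving_fst.ae EuclideanSpace.ae_forall_apply_ne_zero]
    with p hp
  rw [Real.norm_of_nonneg (by positivity)]
  calc |p.2| ^ a * ‖p.1‖ ^ B * (1 + ‖p‖) ^ (-N)
      ≤ |p.2| ^ a * (∏ i, |p.1 i| ^ (B / m)) *
          ((∏ i, (1 + |p.1 i|) ^ (-2 : ℝ)) * (1 + |p.2|) ^ (-(N - 2 * m))) := by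
        gcongr
        · exact EuclideanSpace.norm_rpow_le_prod_abs_apply_rpow hp hB0
        · exact one_add_norm_rpow_neg_le p (by linarith)
    _ = (∏ i, |p.1 i| ^ (B / m) * (1 + |p.1 i|) ^ (-2 : ℝ)) *
          (|p.2| ^ a * (1 + |p.2|) ^ (-(N - 2 * m))) := by
        rw [Finset.prod_mul_distrib]; ring

lemma integrable_abs_snd_rpow_mul_sq_add_sq_rpow_neg_of_nonpos [Nonempty ι] {a c N : ℝ}
    (ha : -1 < a) (hc : c ≤ 0) (hN : a + 1 + 2 * Fintype.card ι - 2 * c < N) :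
    Integrable fun p : EuclideanSpace ℝ ι × ℝ =>
      |p.2| ^ a * (‖p.1‖ ^ 2 + p.2 ^ 2) ^ (-c) * (1 + ‖p‖) ^ (-N) := by
  have hint := integrable_abs_snd_rpow_mul_norm_fst_rpow_mul_one_add_norm_rpow_neg
    (ι := ι) (B := 0) (N := N + 2 * c) ha (neg_lt_zero.2 (by positivity)) le_rfl (by linarith)
  refine (hint.const_mul (2 ^ (-c))).mono' (by fun_prop) (ae_of_all _ fun p => ?_)
  have hp : 0 < 1 + ‖p‖ := by positivity
  have hle : ‖p.1‖ ^ 2 + p.2 ^ 2 ≤ 2 * (1 + ‖p‖) ^ 2 := by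
    have hx : ‖p.1‖ ^ 2 ≤ (1 + ‖p‖) ^ 2 := by gcongr; linarith [norm_fst_le p]
    have ht : |p.2| ^ 2 ≤ (1 + ‖p‖) ^ 2 := by
      gcongr; linarith [show |p.2| ≤ ‖p‖ by simpa using norm_snd_le p]
    rw [sq_abs] at ht
    linarith
  rw [Real.norm_of_nonneg (by positivity), rpow_zero, mul_one]
  calc |p.2| ^ a * (‖p.1‖ ^ 2 + p.2 ^ 2) ^ (-c) * (1 + ‖p‖) ^ (-N)
      ≤ |p.2| ^ a * (2 * (1 + ‖p‖) ^ 2) ^ (-c) * (1 + ‖p‖) ^ (-N) := by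
        gcongr _ * ?_ * _
        exact rpow_le_rpow (by positivity) hle (by linarith)
    _ = 2 ^ (-c) * (|p.2| ^ a * (1 + ‖p‖) ^ (-(N + 2 * c))) := by
        rw [mul_rpow (by norm_num) (by positivity), ← rpow_natCast_mul hp.le, mul_assoc,
          mul_assoc, ← rpow_add hp]
        ring_nf

lemma integrable_abs_snd_rpow_mul_sq_add_sq_rpow_neg_of_pos [Nonempty ι] {a c N : ℝ}
    (ha : -1 < a) (hac : -(Fintype.card ι + 1 : ℝ) < a - 2 * c) (hc : 0 < c)
    (hN : a + 1 + 2 * Fintype.card ι < N) :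
    Integrable fun p : EuclideanSpace ℝ ι × ℝ =>
      |p.2| ^ a * (‖p.1‖ ^ 2 + p.2 ^ 2) ^ (-c) * (1 + ‖p‖) ^ (-N) := by
  set m : ℝ := (Fintype.card ι : ℝ)
  have hm : 0 < m := by positivity
  obtain ⟨s, hs₁, hs₂⟩ : ∃ s, max 0 (c - m / 2) < s ∧ s < min c ((a + 1) / 2) :=
    exists_between (max_lt (lt_min hc (by linarith)) (lt_min (by linarith) (by linarith)))
  rw [max_lt_iff] at hs₁
  rw [lt_min_iff] at hs₂
  have hint := integrable_abs_snd_rpow_mul_norm_fst_rpow_mul_one_add_norm_rpow_neg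
    (ι := ι) (a := a - 2 * s) (B := -2 * (c - s)) (N := N) (by linarith) (by linarith)
    (by linarith) (by linarith)
  refine hint.mono' (by fun_prop) ?_
  filter_upwards [Measure.quasiMeasurePreserving_fst.ae (Measure.ae_ne volume 0),
    Measure.quasiMeasurePreserving_snd.ae (Measure.ae_ne volume 0)] with p hx ht
  have hx : 0 < ‖p.1‖ := norm_pos_iff.2 hx
  have ht : 0 < |p.2| := abs_pos.2 ht
  rw [Real.norm_of_nonneg (by positivity)]
  calc |p.2| ^ a * (‖p.1‖ ^ 2 + p.2 ^ 2) ^ (-c) * (1 + ‖p‖) ^ (-N)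
      ≤ |p.2| ^ a * (‖p.1‖ ^ (-2 * (c - s)) * |p.2| ^ (-2 * s)) * (1 + ‖p‖) ^ (-N) := by
        rw [← sq_abs p.2]
        gcongr
        exact sq_add_sq_rpow_neg_le hx ht hs₁.1.le hs₂.1.le
    _ = |p.2| ^ (a - 2 * s) * ‖p.1‖ ^ (-2 * (c - s)) * (1 + ‖p‖) ^ (-N) := by
        rw [show a - 2 * s = a + -2 * s by ring, rpow_add ht]; ring

lemma integrable_abs_snd_rpow_mul_sq_add_sq_rpow_neg [Nonempty ι] {a c N : ℝ} (ha : -1 < a)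
    (hac : -(Fintype.card ι + 1 : ℝ) < a - 2 * c)
    (hN : a + 1 + 2 * Fintype.card ι + 2 * |c| < N) :
    Integrable fun p : EuclideanSpace ℝ ι × ℝ =>
      |p.2| ^ a * (‖p.1‖ ^ 2 + p.2 ^ 2) ^ (-c) * (1 + ‖p‖) ^ (-N) := by
  rcases le_or_gt c 0 with hc | hc
  · exact integrable_abs_snd_rpow_mul_sq_add_sq_rpow_neg_of_nonpos ha hc
      (by linarith [abs_of_nonpos hc])
  · exact integrable_abs_snd_rpow_mul_sq_add_sq_rpow_neg_of_pos ha hac hc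
      (by linarith [abs_nonneg c])

end Weights

lemma norm_kker_le (n : ℕ) (lam nu : ℂ) (p : EuclideanSpace ℝ (Fin (n - 1)) × ℝ) :
    ‖kker n lam nu p‖ ≤ |p.2| ^ ((lam + nu).re - n) * (‖p.1‖ ^ 2 + p.2 ^ 2) ^ (-nu.re) := by
  unfold kker
  split_ifs with ht
  · rw [norm_zero]; positivity
  · have hr : 0 < ‖p.1‖ ^ 2 + p.2 ^ 2 := by positivity
    rw [norm_mul, Complex.norm_cpow_eq_rpow_re_of_pos (abs_pos.2 ht),
      Complex.norm_cpow_eq_rpow_re_of_pos hr]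
    simp

lemma measurable_kker (n : ℕ) (lam nu : ℂ) : Measurable (kker n lam nu) :=
  Measurable.ite (measurableSet_eq_fun measurable_snd measurable_const) measurable_const
    (by fun_prop)

theorem kernel_mul_schwartz_integrable (n : ℕ) (hn : 2 ≤ n) (lam nu : ℂ)
    (h1 : 0 < (lam - nu).re) (h2 : (n : ℝ) - 1 < (lam + nu).re)
    (φ : SchwartzMap (EuclideanSpace ℝ (Fin (n - 1)) × ℝ) ℂ) :
    Integrable (fun p => kker n lam nu p * φ p) volume := by
  have : Nonempty (Fin (n - 1)) := ⟨⟨0, by omega⟩⟩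
  have hdim : (Fintype.card (Fin (n - 1)) : ℝ) + 1 = n := by
    rw [Fintype.card_fin, Nat.cast_sub (by omega)]; push_cast; ring
  obtain ⟨N, hN⟩ := exists_nat_gt
    ((lam + nu).re - n + 1 + 2 * Fintype.card (Fin (n - 1)) + 2 * |nu.re|)
  have hW := integrable_abs_snd_rpow_mul_sq_add_sq_rpow_neg (ι := Fin (n - 1))
    (a := (lam + nu).re - n) (c := nu.re) (by linarith)
    (by rw [hdim]; simp only [Complex.sub_re] at h1; simp only [Complex.add_re]; linarith) hN
  refine SchwartzMap.integrable_mul_of_integrable_norm_mul (N := N)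
    (measurable_kker n lam nu).aemeasurable
    (hW.mono' ((measurable_kker n lam nu).norm.mul (by fun_prop)).aestronglyMeasurable
      (ae_of_all _ fun p => ?_)) φ
  rw [Real.norm_of_nonneg (by positivity)]
  exact mul_le_mul_of_nonneg_right (norm_kker_le n lam nu p) (by positivity)
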